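/- Let w be a k×ℓ partial permutation matrix and let c(w) ∈ S_m be its minimal-length completion. Then the map extending a k×ℓ pipe dream by elbow tiles (i.e. adding no crosses outside the k×ℓ grid) gives identifications RPipes(w) = RPipes(c(w)) and Pipes(w) = Pipes(c(w)). Moreover, if v ∈ S_{m'} is any extension of c(w) by the identity permutation, then RPipes(w) = RPipes(v) and Pipes(w) = Pipes(v). -/

import Mathlib

open scoped Classical

noncomputable section

namespace QP

/-! ### Permutations, Demazure products and pipe dreams.

All permutations are modeled as elements of `Equiv.Perm ℕ` (with 0-indexed
positions); a permutation "in `S_m`" is one fixing every `i ≥ m`. -/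

/-- 0-Hecke (Demazure) right multiplication by the simple transposition `τᵢ = (i, i+1)`. -/
def hstep (u : Equiv.Perm ℕ) (i : ℕ) : Equiv.Perm ℕ :=
  if u i < u (i + 1) then u * Equiv.swap i (i + 1) else u

/-- Demazure product of a word in the simple transpositions (0-indexed). -/
def hword (l : List ℕ) : Equiv.Perm ℕ := l.foldl hstep 1

/-- Row reading word of a pipe dream on a `k × l` grid: rows top-to-bottom, within
each row right-to-left; a cross at (0-indexed) `(i,j)` contributes the letter `i+j`. -/
def pipeWord (k l : ℕ) (P : Finset (ℕ × ℕ)) : List ℕ :=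
  (List.range k).flatMap fun i =>
    (List.range l).reverse.filterMap fun j => if (i, j) ∈ P then some (i + j) else none

/-- Demazure product `δ(P)` of a pipe dream on a `k × l` grid. -/
def demazure (k l : ℕ) (P : Finset (ℕ × ℕ)) : Equiv.Perm ℕ := hword (pipeWord k l P)

/-- Coxeter length of a permutation, computed as the number of inversions among
positions `< m` (the true length whenever the permutation fixes all `i ≥ m`). -/
def lenB (m : ℕ) (v : Equiv.Perm ℕ) : ℕ :=
  ((Finset.range m ×ˢ Finset.range m).filter fun p => p.1 < p.2 ∧ v p.2 < v p.1).card

/-- `v` fixes every point `≥ m`, i.e. `v ∈ S_m`. -/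
def fixesFrom (m : ℕ) (v : Equiv.Perm ℕ) : Prop := ∀ i, m ≤ i → v i = i

/-- A `k × l` partial permutation matrix, recorded as its set of positions of 1s
(0-indexed). -/
def IsPartialPerm (k l : ℕ) (w : Finset (ℕ × ℕ)) : Prop :=
  (∀ p ∈ w, p.1 < k ∧ p.2 < l) ∧
  (∀ p ∈ w, ∀ q ∈ w, p.1 = q.1 → p = q) ∧
  (∀ p ∈ w, ∀ q ∈ w, p.2 = q.2 → p = q)

/-- 180° rotation of a subset of the `k × l` grid. -/
def rotF (k l : ℕ) (w : Finset (ℕ × ℕ)) : Finset (ℕ × ℕ) :=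
  w.image fun p => (k - 1 - p.1, l - 1 - p.2)

/-- Transpose of a subset of a grid. -/
def transposeF (w : Finset (ℕ × ℕ)) : Finset (ℕ × ℕ) := w.image fun p => (p.2, p.1)

/-- The northwest `k × l` truncation of (the matrix of) a permutation. -/
def matrixOf (k l : ℕ) (v : Equiv.Perm ℕ) : Finset (ℕ × ℕ) :=
  (Finset.range k ×ˢ Finset.range l).filter fun p => v p.1 = p.2

/-- `v` is a completion of the `k × l` partial permutation `w`, viewed inside
`S_{k+l}`: its northwest `k × l` corner is exactly `w` and it fixes all `i ≥ k+l`. -/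
def IsCompletion (k l : ℕ) (w : Finset (ℕ × ℕ)) (v : Equiv.Perm ℕ) : Prop :=
  (∀ i < k, ∀ j < l, (v i = j ↔ (i, j) ∈ w)) ∧ fixesFrom (k + l) v

/-- The minimal length completion `c(w)` of a `k × l` partial permutation matrix,
viewed in `S_{k+l}` (equivalently, the minimal-dimension completion extended by the
identity). -/
def completion (k l : ℕ) (w : Finset (ℕ × ℕ)) : Equiv.Perm ℕ :=
  if h : ∃ v, IsCompletion k l w v ∧
      ∀ u, IsCompletion k l w u → lenB (k + l) v ≤ lenB (k + l) u
  then h.choose else 1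

def w0fun (m : ℕ) (i : ℕ) : ℕ := if i < m then m - 1 - i else i

lemma w0_invol (m : ℕ) : Function.Involutive (w0fun m) := by
  intro i; unfold w0fun; split_ifs <;> omega

/-- The longest element of `S_m` (as a permutation of `ℕ` fixing `i ≥ m`). -/
def w0p (m : ℕ) : Equiv.Perm ℕ := (w0_invol m).toPerm

/-- 180° rotation of (the matrix of) a permutation in `S_m`. -/
def rotPerm (m : ℕ) (v : Equiv.Perm ℕ) : Equiv.Perm ℕ := w0p m * v * w0p m

/-- `1^p × v`: the permutation fixing `0, …, p-1` and acting by a shifted copy of `v`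
beyond. -/
def shiftPerm (p : ℕ) (v : Equiv.Perm ℕ) : Equiv.Perm ℕ where
  toFun i := if i < p then i else v (i - p) + p
  invFun i := if i < p then i else v.symm (i - p) + p
  left_inv := by
    intro i
    by_cases h : i < p
    · simp [h]
    · have h2 : ¬ (v (i - p) + p < p) := by omega
      simp only [if_neg h, if_neg h2, Nat.add_sub_cancel, Equiv.symm_apply_apply]
      omega
  right_inv := by
    intro i
    by_cases h : i < p
    · simp [h]
    · have h2 : ¬ (v.symm (i - p) + p < p) := by omega
      simp only [if_neg h, if_neg h2, Nat.add_sub_cancel, Equiv.apply_symm_apply]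
      omega

/-- One step of the 0-Hecke product of two permutations: repeatedly peel left
descents off the second factor. The first argument is fuel (an upper bound for the
length of the second factor). -/
def heckeAux : ℕ → Equiv.Perm ℕ → Equiv.Perm ℕ → Equiv.Perm ℕ
  | 0, u, _ => u
  | fuel + 1, u, v =>
    if h : ∃ i, v.symm (i + 1) < v.symm i then
      heckeAux fuel (hstep u (Nat.find h)) (Equiv.swap (Nat.find h) (Nat.find h + 1) * v)
    else u

/-- 0-Hecke (Demazure) product of two permutations of `S_m`. -/
def heckeMul (m : ℕ) (u v : Equiv.Perm ℕ) : Equiv.Perm ℕ := heckeAux (lenB m v) u v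

/-- 0-Hecke (Demazure) product of a list of permutations of `S_m`. -/
def heckeList (m : ℕ) (l : List (Equiv.Perm ℕ)) : Equiv.Perm ℕ := l.foldl (heckeMul m) 1

/-- All pipe dreams on the `k × l` grid with Demazure product `v`. -/
def pipesFin (k l : ℕ) (v : Equiv.Perm ℕ) : Finset (Finset (ℕ × ℕ)) :=
  ((Finset.range k ×ˢ Finset.range l).powerset).filter fun P => demazure k l P = v

/-- All reduced pipe dreams on the `k × l` grid with Demazure product `v`. -/
def rpipesFin (k l : ℕ) (v : Equiv.Perm ℕ) : Finset (Finset (ℕ × ℕ)) :=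
  (pipesFin k l v).filter fun P => P.card = lenB (k + l) v

end QP

namespace QP

/-! ### The bipartite quiver block structure.

A bipartite type `A` quiver has source vertices `y_0, …, y_n` and sink vertices
`x_1, …, x_n` (indices increasing right-to-left), arrows `β_k : y_k → x_k` and
`α_k : y_{k-1} → x_k`.  Dimension vectors are recorded as `dx dy : ℕ → ℕ` (the
relevant values being `dx 1, …, dx n` and `dy 0, …, dy n`).

`d × d` grids carry the block structure with row blocks `y_0, …, y_n, x_n, …, x_1`
and column blocks `x_n, …, x_1, y_0, …, y_n`; everything is 0-indexed. -/

def dX (n : ℕ) (dx : ℕ → ℕ) : ℕ := ∑ i ∈ Finset.Icc 1 n, dx i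

def dY (n : ℕ) (dy : ℕ → ℕ) : ℕ := ∑ i ∈ Finset.range (n + 1), dy i

def dd (n : ℕ) (dx dy : ℕ → ℕ) : ℕ := dY n dy + dX n dx

/-- Row offset of the row block `y_j`. -/
def rowY (dy : ℕ → ℕ) (j : ℕ) : ℕ := ∑ i ∈ Finset.range j, dy i

/-- Column offset of the column block `x_k`. -/
def colX (n : ℕ) (dx : ℕ → ℕ) (k : ℕ) : ℕ := ∑ i ∈ Finset.Icc (k + 1) n, dx i

/-- Row offset of the row block `x_k`. -/
def rowX (n : ℕ) (dx dy : ℕ → ℕ) (k : ℕ) : ℕ := dY n dy + colX n dx k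

/-- Column offset of the column block `y_j`. -/
def colY (n : ℕ) (dx dy : ℕ → ℕ) (j : ℕ) : ℕ := dX n dx + rowY dy j

/-- The block `α_k`, at (row block `y_{k-1}`, column block `x_k`). -/
def alphaBlock (n : ℕ) (dx dy : ℕ → ℕ) (k : ℕ) : Finset (ℕ × ℕ) :=
  Finset.Ico (rowY dy (k - 1)) (rowY dy (k - 1) + dy (k - 1)) ×ˢ
    Finset.Ico (colX n dx k) (colX n dx k + dx k)

/-- The block `β_k`, at (row block `y_k`, column block `x_k`). -/
def betaBlock (n : ℕ) (dx dy : ℕ → ℕ) (k : ℕ) : Finset (ℕ × ℕ) :=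
  Finset.Ico (rowY dy k) (rowY dy k + dy k) ×ˢ
    Finset.Ico (colX n dx k) (colX n dx k + dx k)

/-- The snake region: the union of the blocks `α_k, β_k`, `1 ≤ k ≤ n`. -/
def snake (n : ℕ) (dx dy : ℕ → ℕ) : Finset (ℕ × ℕ) :=
  (Finset.Icc 1 n).biUnion fun k => alphaBlock n dx dy k ∪ betaBlock n dx dy k

/-- `P_*`: crosses at exactly the positions of the northwest `d_y × d_x` subgrid
outside the snake region. -/
def Pstar (n : ℕ) (dx dy : ℕ → ℕ) : Finset (ℕ × ℕ) :=
  (Finset.range (dY n dy) ×ˢ Finset.range (dX n dx)) \ snake n dx dy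

/-- `Pipes(v_0, v)`: pipe dreams on the `d × d` grid with Demazure product `v`, all
of whose crosses lie in the northwest `d_y × d_x` subgrid. -/
def pipesNW (n : ℕ) (dx dy : ℕ → ℕ) (v : Equiv.Perm ℕ) : Finset (Finset (ℕ × ℕ)) :=
  ((Finset.range (dY n dy) ×ˢ Finset.range (dX n dx)).powerset).filter fun P =>
    demazure (dd n dx dy) (dd n dx dy) P = v

/-- `RPipes(v_0, v)`: the reduced members of `Pipes(v_0, v)`. -/
def rpipesNW (n : ℕ) (dx dy : ℕ → ℕ) (v : Equiv.Perm ℕ) : Finset (Finset (ℕ × ℕ)) :=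
  (pipesNW n dx dy v).filter fun P => P.card = lenB (dd n dx dy) v

/-- The mini pipe dream `P_k`: restriction of `P` to the block `β_k`, in local
coordinates. -/
def miniB (n : ℕ) (dx dy : ℕ → ℕ) (P : Finset (ℕ × ℕ)) (k : ℕ) : Finset (ℕ × ℕ) :=
  (P ∩ betaBlock n dx dy k).image fun p => (p.1 - rowY dy k, p.2 - colX n dx k)

/-- The mini pipe dream `P^k`: restriction of `P` to the block `α_k`, in local
coordinates. -/
def miniA (n : ℕ) (dx dy : ℕ → ℕ) (P : Finset (ℕ × ℕ)) (k : ℕ) : Finset (ℕ × ℕ) :=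
  (P ∩ alphaBlock n dx dy k).image fun p => (p.1 - rowY dy (k - 1), p.2 - colX n dx k)

/-! ### Lacing diagrams and the group `S_𝐝`. -/

/-- Data of a lacing diagram: partial permutations `w_k` (of size `dy k × dx k`,
for the arrows `β_k`) and `w^k` (of size `dy (k-1) × dx k`, for the arrows `α_k`). -/
abbrev LaceData := (ℕ → Finset (ℕ × ℕ)) × (ℕ → Finset (ℕ × ℕ))

/-- Elements of `S_𝐝 = ∏_k (S_{β_k} × S_{α_k})`: tuples `(v_k, v^k)_k` of
permutations, `v_k ∈ S_{dy k + dx k}` and `v^k ∈ S_{dy (k-1) + dx k}`. -/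
abbrev SD := (ℕ → Equiv.Perm ℕ) × (ℕ → Equiv.Perm ℕ)

def IsLacingDiagram (n : ℕ) (dx dy : ℕ → ℕ) (L : LaceData) : Prop :=
  (∀ k, 1 ≤ k → k ≤ n →
    IsPartialPerm (dy k) (dx k) (L.1 k) ∧ IsPartialPerm (dy (k - 1)) (dx k) (L.2 k)) ∧
  (∀ k, k = 0 ∨ n < k → L.1 k = ∅ ∧ L.2 k = ∅)

def InSD (n : ℕ) (dx dy : ℕ → ℕ) (x : SD) : Prop :=
  (∀ k, 1 ≤ k → k ≤ n →
    fixesFrom (dy k + dx k) (x.1 k) ∧ fixesFrom (dy (k - 1) + dx k) (x.2 k)) ∧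
  (∀ k, k = 0 ∨ n < k → x.1 k = 1 ∧ x.2 k = 1)

/-- The completion map `𝔠 : Laces(𝐝) → S_𝐝`,
`(w_n, w^n, …) ↦ (c(w_n), c(rot(w^n)), …)`. -/
def cOp (n : ℕ) (dx dy : ℕ → ℕ) (L : LaceData) : SD :=
  (fun k => if 1 ≤ k ∧ k ≤ n then completion (dy k) (dx k) (L.1 k) else 1,
   fun k => if 1 ≤ k ∧ k ≤ n then
      completion (dy (k - 1)) (dx k) (rotF (dy (k - 1)) (dx k) (L.2 k)) else 1)

/-- The truncation map `LD : S_𝐝 → Laces(𝐝)`,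
`(v_k, v^k)_k ↦ (t_k(v_k), rot(t^k(v^k)))_k`. -/
def LDOp (n : ℕ) (dx dy : ℕ → ℕ) (x : SD) : LaceData :=
  (fun k => if 1 ≤ k ∧ k ≤ n then matrixOf (dy k) (dx k) (x.1 k) else ∅,
   fun k => if 1 ≤ k ∧ k ≤ n then
      rotF (dy (k - 1)) (dx k) (matrixOf (dy (k - 1)) (dx k) (x.2 k)) else ∅)

/-- The operation `π` on pipe dreams:
`π(P) = (δ(P_n), δ(rot(P^n)), …, δ(P_1), δ(rot(P^1))) ∈ S_𝐝`. -/
def piOp (n : ℕ) (dx dy : ℕ → ℕ) (P : Finset (ℕ × ℕ)) : SD :=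
  (fun k => if 1 ≤ k ∧ k ≤ n then demazure (dy k) (dx k) (miniB n dx dy P k) else 1,
   fun k => if 1 ≤ k ∧ k ≤ n then
      demazure (dy (k - 1)) (dx k) (rotF (dy (k - 1)) (dx k) (miniA n dx dy P k)) else 1)

/-- "Follow the pipes" for a single pipe dream on a `k × l` grid: the partial
permutation matrix connecting the west wall to the north wall (double crossings of a
pair of pipes being ignored); concretely, the northwest `k × l` truncation of the
matrix of the Demazure product. -/
def followPipes (k l : ℕ) (P : Finset (ℕ × ℕ)) : Finset (ℕ × ℕ) :=
  matrixOf k l (demazure k l P)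

/-- The pipes-to-laces operation `𝔴`. -/
def wOp (n : ℕ) (dx dy : ℕ → ℕ) (P : Finset (ℕ × ℕ)) : LaceData :=
  (fun k => if 1 ≤ k ∧ k ≤ n then followPipes (dy k) (dx k) (miniB n dx dy P k) else ∅,
   fun k => if 1 ≤ k ∧ k ≤ n then
      rotF (dy (k - 1)) (dx k)
        (followPipes (dy (k - 1)) (dx k) (rotF (dy (k - 1)) (dx k) (miniA n dx dy P k)))
    else ∅)

end QP

namespace QP

/-! ### Laces and lace counts.

Columns of a lacing diagram are indexed left-to-right by `1, …, 2n+1`: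
odd position `2m+1` carries the vertex `y_{n-m}`, even position `2m` the vertex
`x_{n-m+1}`. -/

/-- Number of dots in the column at position `p`. -/
def colSize (n : ℕ) (dx dy : ℕ → ℕ) (p : ℕ) : ℕ :=
  if p % 2 = 1 then dy (n - (p - 1) / 2) else dx (n - p / 2 + 1)

/-- The matching (partial permutation) between consecutive columns `p` and `p+1`
of a lacing diagram. -/
def matchingAt (n : ℕ) (_dx _dy : ℕ → ℕ) (L : LaceData) (p : ℕ) : Finset (ℕ × ℕ) :=
  if p % 2 = 1 then L.1 (n - (p - 1) / 2) else transposeF (L.2 (n - p / 2 + 1))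

/-- Composition of relations (partial permutations). -/
def compF (A B : Finset (ℕ × ℕ)) : Finset (ℕ × ℕ) :=
  ((A ×ˢ B).filter fun q => q.1.2 = q.2.1).image fun q => (q.1.1, q.2.2)

/-- Paths of the lacing diagram from column `u` to column `u + t`. -/
def pathF (n : ℕ) (dx dy : ℕ → ℕ) (L : LaceData) (u : ℕ) : ℕ → Finset (ℕ × ℕ)
  | 0 => (Finset.range (colSize n dx dy u)).image fun i => (i, i)
  | t + 1 => compF (pathF n dx dy L u t) (matchingAt n dx dy L (u + t))

/-- Number of paths (strands) of the lacing diagram connecting column `u` to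
column `v` (zero if out of range). -/
def pathCount (n : ℕ) (dx dy : ℕ → ℕ) (L : LaceData) (u v : ℕ) : ℕ :=
  if 1 ≤ u ∧ u ≤ v ∧ v ≤ 2 * n + 1 then (pathF n dx dy L u (v - u)).card else 0

/-- Number of laces with left endpoint in column `u` and right endpoint in column
`v` (by inclusion–exclusion on path counts). -/
def laceCount (n : ℕ) (dx dy : ℕ → ℕ) (L : LaceData) (u v : ℕ) : ℤ :=
  (pathCount n dx dy L u v : ℤ) - pathCount n dx dy L (u - 1) v
    - pathCount n dx dy L u (v + 1) + pathCount n dx dy L (u - 1) (v + 1)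

/-- Two lacing diagrams lie in the same `GL(𝐝)`-orbit iff they have the same number
of laces between any two pairs of columns. -/
def sameOrbit (n : ℕ) (dx dy : ℕ → ℕ) (L L' : LaceData) : Prop :=
  ∀ u v, laceCount n dx dy L u v = laceCount n dx dy L' u v

/-- `|w|`: the number of crossings in the extended lacing diagram of `w`, namely
`Σ_k ℓ(c(w_k)) + Σ_k ℓ(c(rot(w^k)))`. -/
def lacingLength (n : ℕ) (dx dy : ℕ → ℕ) (L : LaceData) : ℕ :=
  (∑ k ∈ Finset.Icc 1 n, lenB (dy k + dx k) (completion (dy k) (dx k) (L.1 k))) +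
  ∑ k ∈ Finset.Icc 1 n,
    lenB (dy (k - 1) + dx k)
      (completion (dy (k - 1)) (dx k) (rotF (dy (k - 1)) (dx k) (L.2 k)))

/-- `W(Ω)`: minimal lacing diagrams in the orbit of `L₀`. -/
def MinimalLacings (n : ℕ) (dx dy : ℕ → ℕ) (L₀ : LaceData) : Set LaceData :=
  {w | IsLacingDiagram n dx dy w ∧ sameOrbit n dx dy w L₀ ∧
    ∀ w', IsLacingDiagram n dx dy w' → sameOrbit n dx dy w' L₀ →
      lacingLength n dx dy w ≤ lacingLength n dx dy w'}

/-! ### The Zelevinsky permutation. -/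

/-- The set of rows of the row block of the vertex at position `p`. -/
def vertRowBlock (n : ℕ) (dx dy : ℕ → ℕ) (p : ℕ) : Finset ℕ :=
  if p % 2 = 1 then
    Finset.Ico (rowY dy (n - (p - 1) / 2)) (rowY dy (n - (p - 1) / 2) + dy (n - (p - 1) / 2))
  else
    Finset.Ico (rowX n dx dy (n - p / 2 + 1)) (rowX n dx dy (n - p / 2 + 1) + dx (n - p / 2 + 1))

/-- The set of columns of the column block of the vertex at position `p`. -/
def vertColBlock (n : ℕ) (dx dy : ℕ → ℕ) (p : ℕ) : Finset ℕ :=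
  if p % 2 = 1 then
    Finset.Ico (colY n dx dy (n - (p - 1) / 2)) (colY n dx dy (n - (p - 1) / 2) + dy (n - (p - 1) / 2))
  else
    Finset.Ico (colX n dx (n - p / 2 + 1)) (colX n dx (n - p / 2 + 1) + dx (n - p / 2 + 1))

/-- Number of 1s of the permutation matrix of `v` in the rows `R` and columns `C`. -/
def onesIn (v : Equiv.Perm ℕ) (R C : Finset ℕ) : ℕ := (R.filter fun i => v i ∈ C).card

/-- `v` is the (bipartite) Zelevinsky permutation of the orbit of the lacing diagram
`L`: conditions (Z1), (Z2) on block entry counts and (Z3) northwest-to-southeast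
arrangement in each block row and block column. -/
def IsZelevinsky (n : ℕ) (dx dy : ℕ → ℕ) (L : LaceData) (v : Equiv.Perm ℕ) : Prop :=
  fixesFrom (dd n dx dy) v ∧
  -- (Z1)
  (∀ pu pv, 1 ≤ pu → pu ≤ pv → pv ≤ 2 * n + 1 →
    (onesIn v (vertRowBlock n dx dy pu) (vertColBlock n dx dy pv) : ℤ)
      = laceCount n dx dy L pu pv) ∧
  -- (Z2)
  (∀ p, 1 ≤ p → p + 1 ≤ 2 * n + 1 →
    onesIn v (vertRowBlock n dx dy (p + 1)) (vertColBlock n dx dy p)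
      = (matchingAt n dx dy L p).card) ∧
  -- (Z3), block rows
  (∀ p, 1 ≤ p → p ≤ 2 * n + 1 → ∀ i ∈ vertRowBlock n dx dy p, ∀ i' ∈ vertRowBlock n dx dy p,
    i < i' →
    (∃ q, 1 ≤ q ∧ q ≤ 2 * n + 1 ∧ v i ∈ vertColBlock n dx dy q ∧ v i' ∈ vertColBlock n dx dy q) →
    v i < v i') ∧
  -- (Z3), block columns
  (∀ p, 1 ≤ p → p ≤ 2 * n + 1 → ∀ j ∈ vertColBlock n dx dy p, ∀ j' ∈ vertColBlock n dx dy p,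
    j < j' →
    (∃ q, 1 ≤ q ∧ q ≤ 2 * n + 1 ∧ v.symm j ∈ vertRowBlock n dx dy q ∧
      v.symm j' ∈ vertRowBlock n dx dy q) →
    v.symm j < v.symm j')

/-- `v_*`: the Zelevinsky permutation of the whole representation space, i.e. the
Zelevinsky permutation of an orbit, of minimal length (the dense orbit). -/
def IsStarZelevinsky (n : ℕ) (dx dy : ℕ → ℕ) (v : Equiv.Perm ℕ) : Prop :=
  (∃ L, IsLacingDiagram n dx dy L ∧ IsZelevinsky n dx dy L v) ∧
  ∀ L' v', IsLacingDiagram n dx dy L' → IsZelevinsky n dx dy L' v' →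
    lenB (dd n dx dy) v ≤ lenB (dd n dx dy) v'

/-! ### `X_Ω`, pipe networks, and moves. -/

/-- `X_Ω = {π(P) : P ∈ Pipes(v_0, v(Ω))}` (here parametrized by `v(Ω)`). -/
def XOmega (n : ℕ) (dx dy : ℕ → ℕ) (vZ : Equiv.Perm ℕ) : Set SD :=
  {x | ∃ P ∈ pipesNW n dx dy vZ, piOp n dx dy P = x}

/-- `X_Ω^red = {π(P) : P ∈ RPipes(v_0, v(Ω))}`. -/
def XOmegaRed (n : ℕ) (dx dy : ℕ → ℕ) (vZ : Equiv.Perm ℕ) : Set SD :=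
  {x | ∃ P ∈ rpipesNW n dx dy vZ, piOp n dx dy P = x}

/-- Pipe networks for a lacing diagram `w`: pipe dreams on the `d_y × d_x` grid
containing `P_*` with `P_k ∈ Pipes(w_k)` and `rot(P^k) ∈ Pipes(w^k)` for all `k`. -/
def PipeNet (n : ℕ) (dx dy : ℕ → ℕ) (w : LaceData) : Set (Finset (ℕ × ℕ)) :=
  {P | (∀ p ∈ P, p.1 < dY n dy ∧ p.2 < dX n dx) ∧ Pstar n dx dy ⊆ P ∧
    ∀ k, 1 ≤ k → k ≤ n →
      demazure (dy k) (dx k) (miniB n dx dy P k) = completion (dy k) (dx k) (w.1 k) ∧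
      demazure (dy (k - 1)) (dx k) (rotF (dy (k - 1)) (dx k) (miniA n dx dy P k))
        = completion (dy (k - 1)) (dx k) (w.2 k)}

/-- PN-reduced pipe networks: each mini pipe dream is a reduced pipe dream of the
corresponding partial permutation. -/
def RPipeNet (n : ℕ) (dx dy : ℕ → ℕ) (w : LaceData) : Set (Finset (ℕ × ℕ)) :=
  {P | P ∈ PipeNet n dx dy w ∧ ∀ k, 1 ≤ k → k ≤ n →
    (miniB n dx dy P k).card = lenB (dy k + dx k) (completion (dy k) (dx k) (w.1 k)) ∧
    (rotF (dy (k - 1)) (dx k) (miniA n dx dy P k)).card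
      = lenB (dy (k - 1) + dx k) (completion (dy (k - 1)) (dx k) (w.2 k))}

def updB (z : SD) (i : ℕ) (p : Equiv.Perm ℕ) : SD := (Function.update z.1 i p, z.2)

def updA (z : SD) (i : ℕ) (p : Equiv.Perm ℕ) : SD := (z.1, Function.update z.2 i p)

/-- The three tuples `(…, τ_k v_i, v^i, …)`, `(…, v_i, rot(τ_{k'} rot(v^i)), …)`,
`(…, τ_k v_i, rot(τ_{k'} rot(v^i)), …)` obtained from the base tuple `z` at a middle
column `x_i` and middle dots `k, k+1` (0-indexed; `k' = dy (i-1) + k`). -/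
def tripleX (dx dy : ℕ → ℕ) (z : SD) (i k : ℕ) : Set SD :=
  {updB z i (Equiv.swap k (k + 1) * z.1 i),
   updA z i (rotPerm (dy (i - 1) + dx i)
     (Equiv.swap (dy (i - 1) + k) (dy (i - 1) + k + 1) * rotPerm (dy (i - 1) + dx i) (z.2 i))),
   updA (updB z i (Equiv.swap k (k + 1) * z.1 i)) i
     (rotPerm (dy (i - 1) + dx i)
       (Equiv.swap (dy (i - 1) + k) (dy (i - 1) + k + 1) * rotPerm (dy (i - 1) + dx i) (z.2 i)))}

/-- The three tuples `(…, v^{i+1}, v_i τ_l, …)`, `(…, rot(rot(v^{i+1}) τ_{l'}), v_i, …)`,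
`(…, rot(rot(v^{i+1}) τ_{l'}), v_i τ_l, …)` obtained from the base tuple `z` at a middle
column `y_i` and middle dots `l, l+1` (0-indexed; `l' = dx (i+1) + l`). -/
def tripleY (dx dy : ℕ → ℕ) (z : SD) (i l : ℕ) : Set SD :=
  {updB z i (z.1 i * Equiv.swap l (l + 1)),
   updA z (i + 1) (rotPerm (dy i + dx (i + 1))
     (rotPerm (dy i + dx (i + 1)) (z.2 (i + 1)) *
       Equiv.swap (dx (i + 1) + l) (dx (i + 1) + l + 1))),
   updA (updB z i (z.1 i * Equiv.swap l (l + 1))) (i + 1)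
     (rotPerm (dy i + dx (i + 1))
       (rotPerm (dy i + dx (i + 1)) (z.2 (i + 1)) *
         Equiv.swap (dx (i + 1) + l) (dx (i + 1) + l + 1)))}

/-- The transposition moves on `S_𝐝` (the moves of the transposition-move lemma,
interchanging any two of the tuples of types 1(a), 1(b), 1(c), respectively
2(a), 2(b), 2(c), under the stated ascent conditions). -/
def Move14Rel (n : ℕ) (dx dy : ℕ → ℕ) (u u' : SD) : Prop :=
  (∃ z : SD, ∃ i k, 1 ≤ i ∧ i ≤ n ∧ k + 1 < dx i ∧
    (z.1 i).symm k < (z.1 i).symm (k + 1) ∧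
    (rotPerm (dy (i - 1) + dx i) (z.2 i)).symm (dy (i - 1) + k)
      < (rotPerm (dy (i - 1) + dx i) (z.2 i)).symm (dy (i - 1) + k + 1) ∧
    u ∈ tripleX dx dy z i k ∧ u' ∈ tripleX dx dy z i k ∧ u ≠ u') ∨
  (∃ z : SD, ∃ i l, 1 ≤ i ∧ i + 1 ≤ n ∧ l + 1 < dy i ∧
    z.1 i l < z.1 i (l + 1) ∧
    z.2 (i + 1) (dx (i + 1) + l) < z.2 (i + 1) (dx (i + 1) + l + 1) ∧
    u ∈ tripleY dx dy z i l ∧ u' ∈ tripleY dx dy z i l ∧ u ≠ u')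

/-- The K-theoretic lacing diagram moves, at the level of extended lacing diagrams
(elements of `S_𝐝`): local moves at a middle column (`x_i` or `y_i`) through two
adjacent non-virtual middle dots, where the two strands through the middle dots are
uncrossed on both sides in the base configuration and at least one of their endpoints
in each outer column is non-virtual; any two of the three resulting configurations
(crossed left / crossed both / crossed right) are interchanged. -/
def KMoveRel (n : ℕ) (dx dy : ℕ → ℕ) (u u' : SD) : Prop :=
  (∃ z : SD, ∃ i k, 1 ≤ i ∧ i ≤ n ∧ k + 1 < dx i ∧
    (z.1 i).symm k < (z.1 i).symm (k + 1) ∧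
    (rotPerm (dy (i - 1) + dx i) (z.2 i)).symm (dy (i - 1) + k)
      < (rotPerm (dy (i - 1) + dx i) (z.2 i)).symm (dy (i - 1) + k + 1) ∧
    ((z.1 i).symm k < dy i ∨ (z.1 i).symm (k + 1) < dy i) ∧
    (dx i ≤ (rotPerm (dy (i - 1) + dx i) (z.2 i)).symm (dy (i - 1) + k) ∨
      dx i ≤ (rotPerm (dy (i - 1) + dx i) (z.2 i)).symm (dy (i - 1) + k + 1)) ∧
    u ∈ tripleX dx dy z i k ∧ u' ∈ tripleX dx dy z i k ∧ u ≠ u') ∨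
  (∃ z : SD, ∃ i l, 1 ≤ i ∧ i + 1 ≤ n ∧ l + 1 < dy i ∧
    z.1 i l < z.1 i (l + 1) ∧
    rotPerm (dy i + dx (i + 1)) (z.2 (i + 1)) (dx (i + 1) + l)
      < rotPerm (dy i + dx (i + 1)) (z.2 (i + 1)) (dx (i + 1) + l + 1) ∧
    (z.1 i l < dx i ∨ z.1 i (l + 1) < dx i) ∧
    (dy i ≤ rotPerm (dy i + dx (i + 1)) (z.2 (i + 1)) (dx (i + 1) + l) ∨
      dy i ≤ rotPerm (dy i + dx (i + 1)) (z.2 (i + 1)) (dx (i + 1) + l + 1)) ∧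
    u ∈ tripleY dx dy z i l ∧ u' ∈ tripleY dx dy z i l ∧ u ≠ u')

/-- Extended diagrams reachable from (the completion of) a minimal lacing diagram by
K-theoretic lacing diagram moves. -/
def KWext (n : ℕ) (dx dy : ℕ → ℕ) (L₀ : LaceData) : Set SD :=
  {x | ∃ w ∈ MinimalLacings n dx dy L₀,
    Relation.ReflTransGen (KMoveRel n dx dy) (cOp n dx dy w) x}

/-- `KW(Ω)`: the K-theoretic lacing diagrams for the orbit of `L₀`. -/
def KW (n : ℕ) (dx dy : ℕ → ℕ) (L₀ : LaceData) : Set LaceData :=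
  LDOp n dx dy '' KWext n dx dy L₀

end QP

namespace QP

/-! ### Alphabets and Schubert / Grothendieck polynomials. -/

/-- Index of the row block `y_j` containing row `r` (for `r < d_y`). -/
def yRowIdx (n : ℕ) (dy : ℕ → ℕ) (r : ℕ) : ℕ :=
  WithBot.unbotD 0 (((Finset.range (n + 1)).filter fun j => rowY dy j ≤ r).max)

/-- Index of the row block `x_k` containing row `r` (for `d_y ≤ r < d`). -/
def xRowIdx (n : ℕ) (dx dy : ℕ → ℕ) (r : ℕ) : ℕ :=
  WithTop.untopD 0 (((Finset.Icc 1 n).filter fun k => rowX n dx dy k ≤ r).min)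

/-- Index of the column block `x_k` containing column `c` (for `c < d_x`). -/
def xColIdx (n : ℕ) (dx : ℕ → ℕ) (c : ℕ) : ℕ :=
  WithTop.untopD 0 (((Finset.Icc 1 n).filter fun k => colX n dx k ≤ c).min)

/-- Index of the column block `y_j` containing column `c` (for `d_x ≤ c < d`). -/
def yColIdx (n : ℕ) (dx dy : ℕ → ℕ) (c : ℕ) : ℕ :=
  WithBot.unbotD 0 (((Finset.range (n + 1)).filter fun j => colY n dx dy j ≤ c).max)

variable {K : Type*}

/-- The variable attached to row `r` of the `d × d` grid: the concatenated alphabet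
`(𝐭, 𝐬) = (𝐭^0, …, 𝐭^n, 𝐬^n, …, 𝐬^1)`.  Here `t k i` is the variable `t^k_{i+1}`
and `s k j` is the variable `s^k_{j+1}`. -/
def rowVar [CommRing K] (n : ℕ) (dx dy : ℕ → ℕ) (t s : ℕ → ℕ → K) (r : ℕ) : K :=
  if r < dY n dy then t (yRowIdx n dy r) (r - rowY dy (yRowIdx n dy r))
  else s (xRowIdx n dx dy r) (r - rowX n dx dy (xRowIdx n dx dy r))

/-- The variable attached to column `c` of the `d × d` grid: the concatenated
alphabet `(𝐬, 𝐭) = (𝐬^n, …, 𝐬^1, 𝐭^0, …, 𝐭^n)`. -/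
def colVar [CommRing K] (n : ℕ) (dx dy : ℕ → ℕ) (t s : ℕ → ℕ → K) (c : ℕ) : K :=
  if c < dX n dx then s (xColIdx n dx c) (c - colX n dx (xColIdx n dx c))
  else t (yColIdx n dx dy c) (c - colY n dx dy (yColIdx n dx dy c))

/-- The double Schubert polynomial `𝔖_v(a; b)` (pipe dream formula, on a `k × l`
grid). -/
def schubert [CommRing K] (k l : ℕ) (v : Equiv.Perm ℕ) (a b : ℕ → K) : K :=
  ∑ P ∈ rpipesFin k l v, ∏ p ∈ P, (a p.1 - b p.2)

/-- The double Grothendieck polynomial `𝔊_v(a; b)` (pipe dream formula, on a `k × l`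
grid). -/
def grothendieck [Field K] (k l : ℕ) (v : Equiv.Perm ℕ) (a b : ℕ → K) : K :=
  ∑ P ∈ pipesFin k l v,
    (-1 : K) ^ ((P.card : ℤ) - (lenB (k + l) v : ℤ)) * ∏ p ∈ P, (1 - a p.1 / b p.2)

/-- `𝔖_𝐰(𝐭; 𝐬) = ∏_k 𝔖_{w_k}(𝐭^k; 𝐬^k) ⬝ ∏_k 𝔖_{rot(w^k)}(𝐭̃^{k-1}; 𝐬̃^k)` for a lacing
diagram `𝐰` (Schubert polynomials of partial permutations being those of their
minimal-length completions). -/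
def schubertLace [CommRing K] (n : ℕ) (dx dy : ℕ → ℕ) (w : LaceData)
    (t s : ℕ → ℕ → K) : K :=
  (∏ k ∈ Finset.Icc 1 n,
    schubert (dy k) (dx k) (completion (dy k) (dx k) (w.1 k))
      (fun i => t k i) (fun j => s k j)) *
  ∏ k ∈ Finset.Icc 1 n,
    schubert (dy (k - 1)) (dx k)
      (completion (dy (k - 1)) (dx k) (rotF (dy (k - 1)) (dx k) (w.2 k)))
      (fun i => t (k - 1) (dy (k - 1) - 1 - i)) (fun j => s k (dx k - 1 - j))

/-- `𝔊_𝐰(𝐭; 𝐬) = ∏_k 𝔊_{w_k}(𝐭^k; 𝐬^k) ⬝ ∏_k 𝔊_{rot(w^k)}(𝐭̃^{k-1}; 𝐬̃^k)`. -/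
def grothendieckLace [Field K] (n : ℕ) (dx dy : ℕ → ℕ) (w : LaceData)
    (t s : ℕ → ℕ → K) : K :=
  (∏ k ∈ Finset.Icc 1 n,
    grothendieck (dy k) (dx k) (completion (dy k) (dx k) (w.1 k))
      (fun i => t k i) (fun j => s k j)) *
  ∏ k ∈ Finset.Icc 1 n,
    grothendieck (dy (k - 1)) (dx k)
      (completion (dy (k - 1)) (dx k) (rotF (dy (k - 1)) (dx k) (w.2 k)))
      (fun i => t (k - 1) (dy (k - 1) - 1 - i)) (fun j => s k (dx k - 1 - j))

/-! ### Data for the Demazure-product factorization of the Zelevinsky permutation. -/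

/-- `ε^k`: Demazure product of the pipe dream with crosses at all positions strictly
north of the block `α_k`. -/
def epsA (n : ℕ) (dx dy : ℕ → ℕ) (k : ℕ) : Equiv.Perm ℕ :=
  demazure (dY n dy) (dX n dx)
    (Finset.range (rowY dy (k - 1)) ×ˢ Finset.Ico (colX n dx k) (colX n dx k + dx k))

/-- `ε_k`: Demazure product of the pipe dream with crosses at all positions strictly
south of the block `β_k` (inside the `d_y × d_x` grid). -/
def epsB (n : ℕ) (dx dy : ℕ → ℕ) (k : ℕ) : Equiv.Perm ℕ :=
  demazure (dY n dy) (dX n dx)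
    (Finset.Ico (rowY dy k + dy k) (dY n dy) ×ˢ Finset.Ico (colX n dx k) (colX n dx k + dx k))

/-- `θ^k`: Demazure product of the pipe dream with crosses at all positions strictly
west of the block `α_k`. -/
def thA (n : ℕ) (dx dy : ℕ → ℕ) (k : ℕ) : Equiv.Perm ℕ :=
  demazure (dY n dy) (dX n dx)
    (Finset.Ico (rowY dy (k - 1)) (rowY dy (k - 1) + dy (k - 1)) ×ˢ Finset.range (colX n dx k))

/-- `θ_k`: Demazure product of the pipe dream with crosses at all positions strictly
east of the block `β_k` (inside the `d_y × d_x` grid). -/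
def thB (n : ℕ) (dx dy : ℕ → ℕ) (k : ℕ) : Equiv.Perm ℕ :=
  demazure (dY n dy) (dX n dx)
    (Finset.Ico (rowY dy k) (rowY dy k + dy k) ×ˢ Finset.Ico (colX n dx k + dx k) (dX n dx))

/-- `a_k = Σ_{i>k} dx i + Σ_{i<k-1} dy i`. -/
def aOff (n : ℕ) (dx dy : ℕ → ℕ) (k : ℕ) : ℕ := colX n dx k + rowY dy (k - 1)

/-- `b_k = Σ_{i>k} dx i + Σ_{i<k} dy i`. -/
def bOff (n : ℕ) (dx dy : ℕ → ℕ) (k : ℕ) : ℕ := colX n dx k + rowY dy k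

/-- `w_k = 1^{b_k} × v_k`. -/
def wShB (n : ℕ) (dx dy : ℕ → ℕ) (x : SD) (k : ℕ) : Equiv.Perm ℕ :=
  shiftPerm (bOff n dx dy k) (x.1 k)

/-- `w^k = 1^{a_k} × rot((v^k)⁻¹)`. -/
def wShA (n : ℕ) (dx dy : ℕ → ℕ) (x : SD) (k : ℕ) : Equiv.Perm ℕ :=
  shiftPerm (aOff n dx dy k) (rotPerm (dy (k - 1) + dx k) (x.2 k)⁻¹)

/-- The factor list `(w^1 w_1 ε_1)(ε^2 w^2 w_2 ε_2) ⋯ (ε^n w^n w_n)` (the factors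
`ε^1` and `ε_n` being the identity). -/
def factorList2 (n : ℕ) (dx dy : ℕ → ℕ) (x : SD) : List (Equiv.Perm ℕ) :=
  ((List.range' 1 n).map fun k =>
    [epsA n dx dy k, wShA n dx dy x k, wShB n dx dy x k, epsB n dx dy k]).flatten

/-- The factor list `(w^1 θ^1)(w_1 w^2 θ^2)(θ_2 w_2 w^3 θ^3) ⋯ (θ_{n-1} w_{n-1} w^n)(θ_n w_n)`
(the factor `θ_1` being the identity). -/
def factorList3 (n : ℕ) (dx dy : ℕ → ℕ) (x : SD) : List (Equiv.Perm ℕ) :=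
  [wShA n dx dy x 1, thA n dx dy 1] ++
    ((List.range' 1 n).map fun k =>
      [thB n dx dy k, wShB n dx dy x k] ++
        (if k = n then [] else [wShA n dx dy x (k + 1), thA n dx dy (k + 1)])).flatten

end QP


namespace QP

/-! Minimality of `c(w)` confines the descents of `c(w)` to positions `< k` and those of
`c(w)⁻¹` to positions `< l`: a descent further out is undone by a simple transposition acting
outside the northwest `k × l` corner, which gives a shorter completion. On the other hand a
cross at `(i, j)` of a pipe dream `P` produces a descent of `δ(P)` at a position `≥ i` and a
descent of `δ(P)⁻¹` at a position `≥ j`, since the rest of the reading word cannot remove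
them. So every pipe dream for `c(w)`, on the `k × l` grid or on an `m' × m'` grid with
`c(w) ∈ S_{m'}`, lies in the intersection of the two grids, and the Demazure product of a pipe
dream does not depend on the grid around it. -/

section Permutations

variable {M N : ℕ} {v : Equiv.Perm ℕ}

def AllDescentsLT (K : ℕ) (v : Equiv.Perm ℕ) : Prop := ∀ p, v (p + 1) < v p → p < K

lemma allDescentsLT_one (K : ℕ) : AllDescentsLT K 1 := fun p h => by
  simp at h

lemma fixesFrom.apply_lt (hv : fixesFrom M v) {x : ℕ} (hx : x < M) : v x < M := by
  by_contra! h
  have := v.injective (hv _ h)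
  omega

lemma fixesFrom.inv (hv : fixesFrom M v) : fixesFrom M v⁻¹ := fun i hi => by
  rw [Equiv.Perm.inv_eq_iff_eq, hv i hi]

lemma fixesFrom.mono (hv : fixesFrom M v) (h : M ≤ N) : fixesFrom N v :=
  fun i hi => hv i (h.trans hi)

lemma fixesFrom.add_two_le_of_descent (hv : fixesFrom M v) {p : ℕ} (h : v (p + 1) < v p) :
    p + 2 ≤ M := by
  by_contra! hp
  have h1 : v (p + 1) = p + 1 := hv _ (by omega)
  rcases Nat.lt_or_ge p M with hpM | hpM
  · have := hv.apply_lt hpM; omega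
  · have := hv p hpM; omega

lemma fixesFrom.allDescentsLT (hv : fixesFrom M v) : AllDescentsLT M v := fun p h => by
  have := hv.add_two_le_of_descent h
  omega

lemma swap_succ_apply_lt {p a b : ℕ} (h : a < b) (hne : ¬(a = p ∧ b = p + 1)) :
    Equiv.swap p (p + 1) a < Equiv.swap p (p + 1) b := by
  rw [Equiv.swap_apply_def, Equiv.swap_apply_def]
  split_ifs <;> omega

lemma lenB_eq_of_le (hv : fixesFrom M v) (h : M ≤ N) : lenB N v = lenB M v := by
  unfold lenB
  congr 1
  ext ⟨a, b⟩
  simp only [Finset.mem_filter, Finset.mem_product, Finset.mem_range]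
  refine ⟨fun ⟨⟨ha, hb⟩, hab, hba⟩ => ⟨⟨?_, ?_⟩, hab, hba⟩,
    fun ⟨⟨ha, hb⟩, hab, hba⟩ => ⟨⟨by omega, by omega⟩, hab, hba⟩⟩
  all_goals
    by_contra! hbM
    rw [hv b (by omega)] at hba
    rcases Nat.lt_or_ge a M with haM | haM
    · have := hv.apply_lt haM; omega
    · rw [hv a haM] at hba; omega

lemma lenB_eq_of_fixesFrom (hM : fixesFrom M v) (hN : fixesFrom N v) : lenB M v = lenB N v := by
  rcases le_total M N with h | h
  · exact (lenB_eq_of_le hM h).symm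
  · exact lenB_eq_of_le hN h

lemma lenB_inv (hv : fixesFrom N v) : lenB N v⁻¹ = lenB N v := by
  unfold lenB
  refine Finset.card_nbij' (fun q => (v⁻¹ q.2, v⁻¹ q.1)) (fun q => (v q.2, v q.1))
    ?_ ?_ (fun q _ => by simp) (fun q _ => by simp) <;>
  · rintro ⟨a, b⟩ h
    simp only [Finset.mem_coe, Finset.mem_filter, Finset.mem_product, Finset.mem_range,
      Equiv.Perm.coe_inv, Equiv.apply_symm_apply, Equiv.symm_apply_apply] at h ⊢
    first
    | exact ⟨⟨hv.inv.apply_lt h.1.2, hv.inv.apply_lt h.1.1⟩, h.2.2, h.2.1⟩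
    | exact ⟨⟨hv.apply_lt h.1.2, hv.apply_lt h.1.1⟩, h.2.2, h.2.1⟩

lemma lenB_mul_swap_add_one {p : ℕ} (hp : p + 1 < N) (hd : v (p + 1) < v p) :
    lenB N (v * Equiv.swap p (p + 1)) + 1 = lenB N v := by
  set s := Equiv.swap p (p + 1)
  have hs : ∀ x, s (s x) = x := Equiv.swap_apply_self _ _
  have hsN : ∀ x < N, s x < N := fun x hx => by
    rw [Equiv.swap_apply_def]; split_ifs <;> omega
  have hmono : ∀ a b, a < b → (a, b) ≠ (p, p + 1) → s a < s b ∧ (s a, s b) ≠ (p, p + 1) := by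
    intro a b hab hne
    refine ⟨swap_succ_apply_lt hab (by simpa using hne), fun h => ?_⟩
    simp only [Prod.mk.injEq] at h
    have ha : a = s p := by rw [← h.1, hs]
    have hb : b = s (p + 1) := by rw [← h.2, hs]
    rw [Equiv.swap_apply_left] at ha
    rw [Equiv.swap_apply_right] at hb
    omega
  have hmem : (p, p + 1) ∈ (Finset.range N ×ˢ Finset.range N).filter
      fun q => q.1 < q.2 ∧ v q.2 < v q.1 := by
    simp only [Finset.mem_filter, Finset.mem_product, Finset.mem_range]
    omega
  unfold lenB
  rw [← Finset.card_erase_add_one hmem]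
  congr 1
  refine Finset.card_nbij' (fun q => (s q.1, s q.2)) (fun q => (s q.1, s q.2)) ?_ ?_
    (fun q _ => by simp [hs]) (fun q _ => by simp [hs])
  · intro q h
    obtain ⟨a, b⟩ := q
    simp only [Finset.mem_coe, Finset.mem_erase, Finset.mem_filter, Finset.mem_product,
      Finset.mem_range] at h ⊢
    simp only [Equiv.Perm.mul_apply] at h ⊢
    obtain ⟨⟨ha, hb⟩, hab, hvab⟩ := h
    have hne : (a, b) ≠ (p, p + 1) := by
      rintro ⟨⟩
      rw [Equiv.swap_apply_left, Equiv.swap_apply_right] at hvab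
      omega
    exact ⟨(hmono a b hab hne).2, ⟨hsN a ha, hsN b hb⟩, (hmono a b hab hne).1, hvab⟩
  · intro q h
    obtain ⟨a, b⟩ := q
    simp only [Finset.mem_coe, Finset.mem_erase, Finset.mem_filter, Finset.mem_product,
      Finset.mem_range] at h ⊢
    simp only [Equiv.Perm.mul_apply] at h ⊢
    obtain ⟨hne, ⟨ha, hb⟩, hab, hvab⟩ := h
    exact ⟨⟨hsN a ha, hsN b hb⟩, (hmono a b hab hne).1, by rwa [hs, hs]⟩

end Permutations

section Completion

variable {k l : ℕ} {w : Finset (ℕ × ℕ)} {v : Equiv.Perm ℕ}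

def IsMinimalCompletion (k l : ℕ) (w : Finset (ℕ × ℕ)) (v : Equiv.Perm ℕ) : Prop :=
  IsCompletion k l w v ∧ ∀ u, IsCompletion k l w u → lenB (k + l) v ≤ lenB (k + l) u

lemma IsCompletion.mul_swap (hv : IsCompletion k l w v) {p : ℕ} (hkp : k ≤ p)
    (hp : p + 2 ≤ k + l) : IsCompletion k l w (v * Equiv.swap p (p + 1)) := by
  refine ⟨fun i hi j hj => ?_, fun i hi => ?_⟩
  · rw [Equiv.Perm.mul_apply, Equiv.swap_apply_of_ne_of_ne (by omega) (by omega)]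
    exact hv.1 i hi j hj
  · rw [Equiv.Perm.mul_apply, Equiv.swap_apply_of_ne_of_ne (by omega) (by omega), hv.2 i hi]

lemma IsCompletion.swap_mul (hv : IsCompletion k l w v) {q : ℕ} (hlq : l ≤ q)
    (hq : q + 2 ≤ k + l) : IsCompletion k l w (Equiv.swap q (q + 1) * v) := by
  refine ⟨fun i hi j hj => ?_, fun i hi => ?_⟩
  · rw [← hv.1 i hi j hj, Equiv.Perm.mul_apply, Equiv.swap_apply_def]
    split_ifs <;> omega
  · rw [Equiv.Perm.mul_apply, hv.2 i hi, Equiv.swap_apply_of_ne_of_ne (by omega) (by omega)]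

lemma IsMinimalCompletion.allDescentsLT (hv : IsMinimalCompletion k l w v) :
    AllDescentsLT k v := by
  intro p hd
  by_contra! hkp
  have hp := hv.1.2.add_two_le_of_descent hd
  have := hv.2 _ (hv.1.mul_swap hkp hp)
  have := lenB_mul_swap_add_one (show p + 1 < k + l by omega) hd
  omega

lemma IsMinimalCompletion.allDescentsLT_inv (hv : IsMinimalCompletion k l w v) :
    AllDescentsLT l v⁻¹ := by
  intro q hd
  by_contra! hlq
  have hq := hv.1.2.inv.add_two_le_of_descent hd
  have hu := hv.1.swap_mul hlq hq
  have h1 := hv.2 _ hu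
  have h2 : lenB (k + l) (Equiv.swap q (q + 1) * v) + 1 = lenB (k + l) v := by
    rw [← lenB_inv hu.2, ← lenB_inv hv.1.2, mul_inv_rev, Equiv.swap_inv]
    exact lenB_mul_swap_add_one (by omega) hd
  omega

lemma completion_eq_one_or (k l : ℕ) (w : Finset (ℕ × ℕ)) :
    completion k l w = 1 ∨ IsMinimalCompletion k l w (completion k l w) := by
  unfold completion
  split_ifs with h
  · exact Or.inr h.choose_spec
  · exact Or.inl rfl

lemma allDescentsLT_completion : AllDescentsLT k (completion k l w) := by
  rcases completion_eq_one_or k l w with h | h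
  · exact h ▸ allDescentsLT_one k
  · exact h.allDescentsLT

lemma allDescentsLT_completion_inv : AllDescentsLT l (completion k l w)⁻¹ := by
  rcases completion_eq_one_or k l w with h | h
  · exact h ▸ inv_one (G := Equiv.Perm ℕ) ▸ allDescentsLT_one l
  · exact h.allDescentsLT_inv

lemma fixesFrom_completion : fixesFrom (k + l) (completion k l w) := by
  rcases completion_eq_one_or k l w with h | h
  · exact h ▸ fun _ _ => rfl
  · exact h.1.2

end Completion

section HeckeSteps

variable {u : Equiv.Perm ℕ}

lemma hstep_apply_succ_lt (u : Equiv.Perm ℕ) (a : ℕ) : hstep u a (a + 1) < hstep u a a := by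
  unfold hstep
  split_ifs with h
  · simpa [Equiv.Perm.mul_apply] using h
  · have := u.injective.ne (show a ≠ a + 1 by omega)
    omega

lemma hstep_eq_or (u : Equiv.Perm ℕ) (a : ℕ) :
    hstep u a = u ∨ hstep u a = u * Equiv.swap a (a + 1) := by
  unfold hstep
  split_ifs <;> simp

lemma hstep_inv_descent {q : ℕ} (h : u⁻¹ (q + 1) < u⁻¹ q) (a : ℕ) :
    (hstep u a)⁻¹ (q + 1) < (hstep u a)⁻¹ q := by
  unfold hstep
  split_ifs with hasc
  · simp only [mul_inv_rev, Equiv.swap_inv, Equiv.Perm.mul_apply]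
    refine swap_succ_apply_lt h fun ⟨h1, h2⟩ => ?_
    rw [Equiv.Perm.inv_eq_iff_eq] at h1 h2
    omega
  · exact h

lemma foldl_hstep_inv_descent (L : List ℕ) {q : ℕ} (h : u⁻¹ (q + 1) < u⁻¹ q) :
    (L.foldl hstep u)⁻¹ (q + 1) < (L.foldl hstep u)⁻¹ q := by
  induction L generalizing u with
  | nil => exact h
  | cons a L ih => exact ih (hstep_inv_descent h a)

lemma foldl_hstep_exists_descent_ge {L : List ℕ} {i : ℕ} (hL : ∀ b ∈ L, i ≤ b)
    (h : ∃ p, i ≤ p ∧ u (p + 1) < u p) :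
    ∃ p, i ≤ p ∧ L.foldl hstep u (p + 1) < L.foldl hstep u p := by
  induction L generalizing u with
  | nil => exact h
  | cons a L ih =>
    refine ih (fun b hb => hL b (List.mem_cons_of_mem _ hb)) ?_
    rcases hstep_eq_or u a with he | he
    · rwa [he]
    · exact ⟨a, hL a List.mem_cons_self, hstep_apply_succ_lt u a⟩

lemma exists_descent_of_apply_lt (f : ℕ → ℕ) {c d : ℕ} (hcd : c ≤ d) (hf : f d < f c) :
    ∃ q, c ≤ q ∧ q < d ∧ f (q + 1) < f q := by
  by_contra! h
  have hmono : ∀ n, c ≤ n → n ≤ d → f c ≤ f n := by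
    intro n hcn
    induction n, hcn using Nat.le_induction with
    | base => exact fun _ => le_rfl
    | succ n hcn ih => exact fun hn => (ih (by omega)).trans (h n hcn (by omega))
  exact absurd (hmono d hcd le_rfl) (not_le.2 hf)

/-- The invariant of reading a pipe dream row by row: before row `r` no value of `u` lies
more than `r` below its position, and while row `r` is read from right to left this weakens to
`r + 1` only at the positions beyond the current letter `t`. -/
def DropLE (r t : ℕ) (u : Equiv.Perm ℕ) : Prop :=
  ∀ x, (x ≤ t → x ≤ u x + r) ∧ x ≤ u x + r + 1

variable {r s t : ℕ}

lemma DropLE.of_le (h : ∀ x, x ≤ u x + r) : DropLE r t u :=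
  fun x => ⟨fun _ => h x, (h x).trans (Nat.le_succ _)⟩

lemma DropLE.mono (h : DropLE r t u) (hst : s ≤ t) : DropLE r s u :=
  fun x => ⟨fun hx => (h x).1 (hx.trans hst), (h x).2⟩

lemma DropLE.hstep_of_lt (h : DropLE r t u) {a : ℕ} (ha : a < t) : DropLE r a (hstep u a) := by
  unfold hstep
  split_ifs
  · intro x
    have h1 := h a
    have h2 := h (a + 1)
    have h3 := h x
    rw [Equiv.Perm.mul_apply, Equiv.swap_apply_def]
    split_ifs <;> omega
  · exact h.mono ha.le

lemma DropLE.foldl_hstep {L : List ℕ} (hL : L.Pairwise (· > ·))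
    (hLt : ∀ b ∈ L, s ≤ b ∧ b < t) (hst : s ≤ t) (h : DropLE r t u) :
    DropLE r s (L.foldl hstep u) := by
  induction L generalizing t u with
  | nil => exact h.mono hst
  | cons a L ih =>
    obtain ⟨hsa, hat⟩ := hLt a List.mem_cons_self
    rw [List.pairwise_cons] at hL
    exact ih hL.2 (fun b hb => ⟨(hLt b (.tail _ hb)).1, hL.1 b hb⟩) hsa (h.hstep_of_lt hat)

end HeckeSteps

section PipeDreams

variable {K L K' L' i j : ℕ} {P : Finset (ℕ × ℕ)}

def rowWord (L : ℕ) (P : Finset (ℕ × ℕ)) (i : ℕ) : List ℕ :=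
  (List.range L).reverse.filterMap fun j => if (i, j) ∈ P then some (i + j) else none

lemma pipeWord_eq_flatMap_rowWord (K L : ℕ) (P : Finset (ℕ × ℕ)) :
    pipeWord K L P = (List.range K).flatMap (rowWord L P) := rfl

lemma mem_rowWord {a : ℕ} : a ∈ rowWord L P i ↔ ∃ j < L, (i, j) ∈ P ∧ i + j = a := by
  simp [rowWord]

lemma rowWord_pairwise : (rowWord L P i).Pairwise (· > ·) := by
  refine List.Pairwise.filterMap _ ?_ (List.pairwise_reverse.2 List.pairwise_lt_range)
  intro a b hab x hx y hy
  split_ifs at hx hy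
  simp only [Option.some.injEq] at hx hy
  omega

lemma le_of_mem_rowWord {a : ℕ} (h : a ∈ rowWord L P i) : i ≤ a ∧ a < i + L := by
  obtain ⟨j, hj, -, rfl⟩ := mem_rowWord.1 h
  omega

lemma le_hword_flatMap_rowWord_add (L : ℕ) (P : Finset (ℕ × ℕ)) (i x : ℕ) :
    x ≤ hword ((List.range i).flatMap (rowWord L P)) x + i := by
  induction i generalizing x with
  | zero => simp [hword]
  | succ i ih =>
    have h := (DropLE.of_le (t := i + L) ih).foldl_hstep (rowWord_pairwise (P := P))
      (fun b hb => ⟨Nat.zero_le b, (le_of_mem_rowWord hb).2⟩) (Nat.zero_le _)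
    rw [List.range_succ, List.flatMap_append, List.flatMap_singleton, hword, List.foldl_append]
    exact (h x).2

lemma pipeWord_eq_of_mem (hi : i < K) (hj : j < L) (hij : (i, j) ∈ P) :
    ∃ G suf, pipeWord K L P = (List.range i).flatMap (rowWord L P) ++ G ++ (i + j) :: suf ∧
      G.Pairwise (· > ·) ∧ (∀ b ∈ G, i + j < b ∧ b < i + L) ∧ ∀ b ∈ suf, i ≤ b := by
  obtain ⟨G, R, hrow⟩ := List.append_of_mem (mem_rowWord.2 ⟨j, hj, hij, rfl⟩)
  have hpw := rowWord_pairwise (L := L) (P := P) (i := i)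
  rw [hrow, List.pairwise_append] at hpw
  have hrange : List.range K = List.range i ++ [i] ++ (List.range (K - i - 1)).map (i + 1 + ·) := by
    rw [← List.range_succ, ← List.range_add]
    congr 1
    omega
  refine ⟨G, R ++ ((List.range (K - i - 1)).map (i + 1 + ·)).flatMap (rowWord L P), ?_, hpw.1,
    fun b hb => ⟨hpw.2.2 b hb _ List.mem_cons_self, ?_⟩, fun b hb => ?_⟩
  · rw [pipeWord_eq_flatMap_rowWord, hrange, List.flatMap_append, List.flatMap_append,
      List.flatMap_singleton, hrow]
    simp
  · exact (le_of_mem_rowWord (hrow ▸ List.mem_append_left _ hb)).2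
  · rcases List.mem_append.1 hb with hb | hb
    · exact (le_of_mem_rowWord (hrow ▸ List.mem_append_right _ (List.mem_cons_of_mem _ hb))).1
    · obtain ⟨_, hi', hb⟩ := List.mem_flatMap.1 hb
      obtain ⟨x, -, rfl⟩ := List.mem_map.1 hi'
      have := (le_of_mem_rowWord hb).1
      omega

lemma exists_descent_ge_of_mem (hi : i < K) (hj : j < L) (hij : (i, j) ∈ P) :
    ∃ p, i ≤ p ∧ demazure K L P (p + 1) < demazure K L P p := by
  obtain ⟨G, suf, hw, -, -, hsuf⟩ := pipeWord_eq_of_mem hi hj hij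
  rw [demazure, hword, hw, List.foldl_append, List.foldl_cons]
  exact foldl_hstep_exists_descent_ge hsuf ⟨i + j, by omega, hstep_apply_succ_lt _ _⟩

lemma exists_inv_descent_ge_of_mem (hi : i < K) (hj : j < L) (hij : (i, j) ∈ P) :
    ∃ q, j ≤ q ∧ (demazure K L P)⁻¹ (q + 1) < (demazure K L P)⁻¹ q := by
  obtain ⟨G, suf, hw, hG, hGb, -⟩ := pipeWord_eq_of_mem hi hj hij
  -- the letter `i + j` creates a descent whose lower value is `≥ j`; between the two values
  -- the inverse has a descent, and descents of the inverse are never removed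
  set u := G.foldl hstep (hword ((List.range i).flatMap (rowWord L P)))
  have hu : DropLE i (i + j + 1) u :=
    (DropLE.of_le (le_hword_flatMap_rowWord_add L P i)).foldl_hstep hG hGb (by omega)
  have hlow : j ≤ hstep u (i + j) (i + j + 1) := by
    have h1 := (hu (i + j)).1 (by omega)
    have h2 := (hu (i + j + 1)).1 le_rfl
    rcases hstep_eq_or u (i + j) with h | h <;> rw [h]
    · omega
    · rw [Equiv.Perm.mul_apply, Equiv.swap_apply_right]
      omega
  obtain ⟨q, hjq, -, hq⟩ := exists_descent_of_apply_lt (fun y => (hstep u (i + j))⁻¹ y)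
    (hstep_apply_succ_lt u (i + j)).le (by simp)
  refine ⟨q, hlow.trans hjq, ?_⟩
  rw [demazure, hword, hw, List.foldl_append, List.foldl_cons, List.foldl_append]
  exact foldl_hstep_inv_descent suf hq

lemma subset_of_allDescentsLT (hP : P ⊆ Finset.range K ×ˢ Finset.range L)
    (hK : AllDescentsLT K' (demazure K L P)) (hL : AllDescentsLT L' (demazure K L P)⁻¹) :
    P ⊆ Finset.range K' ×ˢ Finset.range L' := by
  rintro ⟨i, j⟩ hij
  obtain ⟨hi, hj⟩ := Finset.mem_product.1 (hP hij)
  rw [Finset.mem_range] at hi hj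
  obtain ⟨p, hip, hp⟩ := exists_descent_ge_of_mem hi hj hij
  obtain ⟨q, hjq, hq⟩ := exists_inv_descent_ge_of_mem hi hj hij
  exact Finset.mem_product.2 ⟨Finset.mem_range.2 (hip.trans_lt (hK p hp)),
    Finset.mem_range.2 (hjq.trans_lt (hL q hq))⟩

lemma rowWord_of_le (hP : P ⊆ Finset.range K ×ˢ Finset.range L) (hL : L ≤ L') :
    rowWord L' P i = rowWord L P i := by
  obtain ⟨n, rfl⟩ := Nat.exists_eq_add_of_le hL
  rw [rowWord, List.range_add, List.reverse_append, List.filterMap_append,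
    List.filterMap_eq_nil_iff.2, List.nil_append, rowWord]
  intro a ha
  obtain ⟨x, -, rfl⟩ := List.mem_map.1 (List.mem_reverse.1 ha)
  have : (i, L + x) ∉ P := fun h => by simpa using (Finset.mem_product.1 (hP h)).2
  simp [this]

lemma rowWord_eq_nil (hP : P ⊆ Finset.range K ×ˢ Finset.range L) (hi : K ≤ i) :
    rowWord L' P i = [] := by
  refine List.filterMap_eq_nil_iff.2 fun j _ => ?_
  have : (i, j) ∉ P := fun h => by
    have := Finset.mem_range.1 (Finset.mem_product.1 (hP h)).1
    omega
  simp [this]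

lemma pipeWord_of_le (hP : P ⊆ Finset.range K ×ˢ Finset.range L) (hK : K ≤ K') (hL : L ≤ L') :
    pipeWord K' L' P = pipeWord K L P := by
  obtain ⟨n, rfl⟩ := Nat.exists_eq_add_of_le hK
  have hnil : ((List.range n).map (K + ·)).flatMap (rowWord L' P) = [] :=
    List.flatMap_eq_nil_iff.2 fun i hi => by
      obtain ⟨x, -, rfl⟩ := List.mem_map.1 hi
      exact rowWord_eq_nil hP (Nat.le_add_right K x)
  rw [pipeWord_eq_flatMap_rowWord, pipeWord_eq_flatMap_rowWord, List.range_add,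
    List.flatMap_append, hnil, List.append_nil]
  exact List.flatMap_congr fun i _ => rowWord_of_le hP hL

lemma pipesFin_subset {v : Equiv.Perm ℕ} (hK : AllDescentsLT K' v) (hL : AllDescentsLT L' v⁻¹) :
    pipesFin K L v ⊆ pipesFin K' L' v := by
  intro P hP
  simp only [pipesFin, Finset.mem_filter, Finset.mem_powerset] at hP ⊢
  obtain ⟨hsub, rfl⟩ := hP
  have hsub' := subset_of_allDescentsLT hsub hK hL
  have hmin : P ⊆ Finset.range (min K K') ×ˢ Finset.range (min L L') := fun x hx => by
    have h := Finset.mem_product.1 (hsub hx)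
    have h' := Finset.mem_product.1 (hsub' hx)
    simp only [Finset.mem_product, Finset.mem_range] at h h' ⊢
    omega
  refine ⟨hsub', ?_⟩
  rw [demazure, demazure, pipeWord_of_le hmin (min_le_right _ _) (min_le_right _ _),
    pipeWord_of_le hmin (min_le_left _ _) (min_le_left _ _)]

lemma pipesFin_eq_of_allDescentsLT {v : Equiv.Perm ℕ} (hK : AllDescentsLT K v)
    (hK' : AllDescentsLT K' v) (hL : AllDescentsLT L v⁻¹) (hL' : AllDescentsLT L' v⁻¹) :
    pipesFin K L v = pipesFin K' L' v :=
  (pipesFin_subset hK' hL').antisymm (pipesFin_subset hK hL)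

end PipeDreams

theorem pipes_of_completion_general (k l : ℕ) (w : Finset (ℕ × ℕ))
    (m : ℕ) (hm : fixesFrom m (completion k l w)) :
    rpipesFin k l (completion k l w) = rpipesFin m m (completion k l w) ∧
    pipesFin k l (completion k l w) = pipesFin m m (completion k l w) ∧
    ∀ m', m ≤ m' →
      rpipesFin k l (completion k l w) = rpipesFin m' m' (completion k l w) ∧
      pipesFin k l (completion k l w) = pipesFin m' m' (completion k l w) := by
  have key : ∀ m', m ≤ m' →
      rpipesFin k l (completion k l w) = rpipesFin m' m' (completion k l w) ∧
      pipesFin k l (completion k l w) = pipesFin m' m' (completion k l w) := by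
    intro m' hm'
    have hv : fixesFrom m' (completion k l w) := hm.mono hm'
    have hpipes : pipesFin k l (completion k l w) = pipesFin m' m' (completion k l w) :=
      pipesFin_eq_of_allDescentsLT allDescentsLT_completion hv.allDescentsLT
        allDescentsLT_completion_inv hv.inv.allDescentsLT
    refine ⟨?_, hpipes⟩
    rw [rpipesFin, rpipesFin, hpipes,
      lenB_eq_of_fixesFrom fixesFrom_completion (hv.mono (Nat.le_add_right m' m'))]
  exact ⟨(key m le_rfl).1, (key m le_rfl).2, key⟩

/-- Let `w` be a `k × l` partial permutation matrix and let
`c(w) ∈ S_m` be its minimal-length completion (`m` being the smallest possible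
dimension).  Then extension of pipe dreams by elbow tiles identifies
`RPipes(w) = RPipes(c(w))` and `Pipes(w) = Pipes(c(w))`; moreover for any extension
of `c(w)` by the identity permutation to `S_{m'}` (`m' ≥ m`), also
`RPipes(w) = RPipes(v)` and `Pipes(w) = Pipes(v)`.  (In this encoding a pipe dream is
its finite set of crosses, so extension by elbow tiles is the canonical inclusion.) -/
theorem pipes_of_completion (k l : ℕ) (w : Finset (ℕ × ℕ)) (hw : IsPartialPerm k l w)
    (m : ℕ) (hm : fixesFrom m (completion k l w))
    (hmin : ∀ m', fixesFrom m' (completion k l w) → m ≤ m') :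
    rpipesFin k l (completion k l w) = rpipesFin m m (completion k l w) ∧
    pipesFin k l (completion k l w) = pipesFin m m (completion k l w) ∧
    ∀ m', m ≤ m' →
      rpipesFin k l (completion k l w) = rpipesFin m' m' (completion k l w) ∧
      pipesFin k l (completion k l w) = pipesFin m' m' (completion k l w) :=
  pipes_of_completion_general k l w m hm

end QP
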